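/- Let S be the antipode of the connected graded Hopf algebra (H(X,Ω), m, 1, Δ₀, ε). Then for every nonempty decorated planar rooted forest F ∈ ℱ(X,Ω), S(F) = Σ (−1)^k F_{I₁} ⋯ F_{I_k}, where the sum runs over all ordered tuples (I₁, …, I_k), k ≥ 1, of pairwise disjoint nonempty subsets of V(F) with I₁ ⊔ ⋯ ⊔ I_k = V(F). -/

import Mathlib

open scoped TensorProduct

universe u v w u'

/-- Decorated planar rooted trees: internal vertices are decorated by `Ω`,
leaves are decorated by `X ⊔ Ω` (a leaf decorated by `ω : Ω` is `node ω []`). -/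
inductive PTree (X : Type u) (Ω : Type v) : Type (max u v)
  | leafX : X → PTree X Ω
  | node : Ω → List (PTree X Ω) → PTree X Ω

namespace Moerdijk

variable {X : Type u} {Ω : Type v}

/-- `ℱ(X,Ω)`: decorated planar rooted forests, i.e. the free monoid on decorated
planar rooted trees under concatenation. -/
abbrev RForest (X : Type u) (Ω : Type v) := FreeMonoid (PTree X Ω)

/-- The single-vertex forest `•ₓ` for `x ∈ X`. -/
def leafF (x : X) : RForest X Ω := FreeMonoid.of (PTree.leafX x)

/-- Grafting of a forest onto a new common root decorated by `ω`. -/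
def graft (ω : Ω) (F : RForest X Ω) : RForest X Ω :=
  FreeMonoid.of (PTree.node ω (FreeMonoid.toList F))

variable (k : Type w) [CommRing k]

/-- `H(X,Ω)`: the free `k`-module on decorated planar rooted forests, a unital
associative algebra under the concatenation product. -/
abbrev RAlg (X : Type u) (Ω : Type v) := MonoidAlgebra k (RForest X Ω)

/-- The basis element of `H(X,Ω)` corresponding to a forest `F`. -/
noncomputable def ofF (F : RForest X Ω) : RAlg k X Ω := MonoidAlgebra.of k (RForest X Ω) F

/-- The grafting operator `B⁺_ω : H(X,Ω) → H(X,Ω)` as a linear map. -/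
noncomputable def Bplus (ω : Ω) : RAlg k X Ω →ₗ[k] RAlg k X Ω :=
  MonoidAlgebra.mapDomainLinearMap k k (graft ω)

/-- The value of the coproduct `Δ_λ` on a decorated planar rooted tree:
`Δ_λ(•ₓ) = •ₓ ⊗ 1 + 1 ⊗ •ₓ + λ •ₓ ⊗ •ₓ` and
`Δ_λ(B⁺_ω(F)) = (B⁺_ω ⊗ id)Δ_λ(F) + (id ⊗ B⁺_ω)Δ_λ(F)`. -/
noncomputable def DeltaT (lam : k) : PTree X Ω → (RAlg k X Ω ⊗[k] RAlg k X Ω)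
  | .leafX x =>
      ofF k (leafF x) ⊗ₜ[k] 1 + 1 ⊗ₜ[k] ofF k (leafF x)
        + lam • (ofF k (leafF x) ⊗ₜ[k] ofF k (leafF x))
  | .node ω ts =>
      ((TensorProduct.map (Bplus k ω) LinearMap.id
        + TensorProduct.map LinearMap.id (Bplus k ω) :
          (RAlg k X Ω ⊗[k] RAlg k X Ω) →ₗ[k] (RAlg k X Ω ⊗[k] RAlg k X Ω)))
        ((ts.attach.map fun t => DeltaT lam t.1).prod)
decreasing_by
  have := List.sizeOf_lt_of_mem t.2
  simp only [PTree.node.sizeOf_spec]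
  omega

/-- The value of the coproduct `Δ_λ` on a forest: `Δ_λ(T₁⋯Tₘ) = Δ_λ(T₁)⋯Δ_λ(Tₘ)`. -/
noncomputable def DeltaF (lam : k) (F : RForest X Ω) : RAlg k X Ω ⊗[k] RAlg k X Ω :=
  ((FreeMonoid.toList F).map (DeltaT k lam)).prod

/-- The coproduct `Δ_λ : H(X,Ω) → H(X,Ω) ⊗ H(X,Ω)`. -/
noncomputable def Delta (lam : k) : RAlg k X Ω →ₗ[k] (RAlg k X Ω ⊗[k] RAlg k X Ω) :=
  (Finsupp.lsum k fun F => LinearMap.toSpanSingleton k _ (DeltaF k lam F)) ∘ₗ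
    (MonoidAlgebra.coeffLinearEquiv k).toLinearMap

/-- The counit `ε : H(X,Ω) → k`, sending the empty forest to `1` and every
nonempty forest to `0`. -/
noncomputable def eps : RAlg k X Ω →ₗ[k] k :=
  (Finsupp.lsum k fun F => LinearMap.toSpanSingleton k k
    (if (FreeMonoid.toList F).isEmpty then (1 : k) else 0)) ∘ₗ
    (MonoidAlgebra.coeffLinearEquiv k).toLinearMap

mutual
  /-- The list of subtrees of a tree, rooted at its vertices taken in the total
  order `≤_{h,r}` (preorder: roots first, then subtrees from left to right). -/
  def subT : PTree X Ω → List (PTree X Ω)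
    | .leafX x => [.leafX x]
    | .node ω ts => .node ω ts :: subF ts
  /-- The list of subtrees of a forest, rooted at its vertices in the order `≤_{h,r}`. -/
  def subF : List (PTree X Ω) → List (PTree X Ω)
    | [] => []
    | t :: ts => subT t ++ subF ts
end

/-- The vertices of a forest `F`, listed in the total order `≤_{h,r}`, each vertex
being recorded by the subtree it roots. -/
def vlist (F : RForest X Ω) : List (PTree X Ω) := subF (FreeMonoid.toList F)

/-- The number of vertices of a forest. -/
def numV (F : RForest X Ω) : ℕ := (vlist F).length

/-- The decoration of the root of a tree. -/
def rootDec : PTree X Ω → X ⊕ Ω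
  | .leafX x => Sum.inl x
  | .node ω _ => Sum.inr ω

/-- The decoration of the `i`-th vertex (in the order `≤_{h,r}`) of a forest. -/
def decorV (F : RForest X Ω) (i : Fin (numV F)) : X ⊕ Ω := rootDec ((vlist F).get i)

/-- The number of vertices of the subtree rooted at the `i`-th vertex of `F`. -/
def subSize (F : RForest X Ω) (i : Fin (numV F)) : ℕ := (subT ((vlist F).get i)).length

/-- The order `≤_h` on `V(F)`: `i ≤_h j` iff there is an oriented path from `i` to `j`,
edges being oriented from the roots towards the leaves.  In the preorder indexing, the
descendants of `i` are exactly the indices in `[i, i + subSize F i)`. -/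
def leh (F : RForest X Ω) (i j : Fin (numV F)) : Prop :=
  (i : ℕ) ≤ (j : ℕ) ∧ (j : ℕ) < (i : ℕ) + subSize F i

/-- The (reflexive) relation `≤_r` on `V(F)`: `i ≤_r j` iff `i = j`, or `i` and `j` are
not comparable for `≤_h` and `j` lies more to the right than `i` in the planar
representation of `F`. -/
def ler (F : RForest X Ω) (i j : Fin (numV F)) : Prop :=
  i = j ∨ (¬ leh F i j ∧ ¬ leh F j i ∧ i < j)

instance (F : RForest X Ω) (i j : Fin (numV F)) : Decidable (leh F i j) := by
  unfold leh; infer_instance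

/-- The set `V_X(F)` of vertices of `F` decorated by an element of `X`. -/
def VXset (F : RForest X Ω) : Finset (Fin (numV F)) :=
  Finset.univ.filter fun i => (decorV F i).isLeft

mutual
  /-- Restriction of a tree, whose vertices have preorder indices `off, off + 1, …`,
  to the set of vertices selected by `p`: each kept vertex receives an incoming edge
  from its smallest kept ancestor, if any; otherwise it becomes a root. -/
  def restT (p : ℕ → Bool) : PTree X Ω → ℕ → List (PTree X Ω)
    | .leafX x, off => if p off then [.leafX x] else []
    | .node ω ts, off =>
        if p off then [.node ω (restF p ts (off + 1))] else restF p ts (off + 1)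
  /-- Restriction of a forest to the set of vertices selected by `p`. -/
  def restF (p : ℕ → Bool) : List (PTree X Ω) → ℕ → List (PTree X Ω)
    | [], _ => []
    | t :: ts, off => restT p t off ++ restF p ts (off + (subT t).length)
end

/-- The induced subforest `F_I` of a forest `F` on a subset `I ⊆ V(F)`. -/
def indSub (F : RForest X Ω) (I : Finset (Fin (numV F))) : RForest X Ω :=
  FreeMonoid.ofList
    (restF (fun m => decide (∃ i ∈ I, (i : ℕ) = m)) (FreeMonoid.toList F) 0)

/-!
The coproduct `Δ₀` sends a forest `F` to `∑_I F_I ⊗ F_{V(F) ∖ I}`, so the identity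
`m (S ⊗ id) Δ₀ = η ε` says `S(F) = -∑_{I ⊊ V(F)} S(F_I) F_{V(F) ∖ I}` for `F ≠ 1`. Taking
induced subforests is transitive (`(F_I)_M = F_M` for `M ⊆ I`, once the vertices of `F_I` are
identified with `I` in an order-preserving way), so by induction on the number of vertices
`S(F_I)` is the signed sum over the ordered partitions of `I`. Splitting an ordered partition of
`V(F)` at its last block shows that these signed sums satisfy the same recursion.
-/

end Moerdijk

namespace Finset

variable {β : Type*} [DecidableEq β]

theorem sum_powerset_union {M : Type*} [AddCommMonoid M] {s t : Finset β}
    (h : Disjoint s t) (f : Finset β → M) :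
    ∑ w ∈ (s ∪ t).powerset, f w = ∑ a ∈ s.powerset, ∑ b ∈ t.powerset, f (a ∪ b) := by
  induction s using Finset.induction_on generalizing f with
  | empty => simp
  | insert x s hx ih =>
    rw [disjoint_insert_left] at h
    rw [insert_union, sum_powerset_insert (by simp [hx, h.1]), sum_powerset_insert hx,
      ih h.2, ih h.2]
    simp only [insert_union]

theorem card_filter_lt_orderEmbOfFin {α : Type*} [LinearOrder α] (s : Finset α) {k : ℕ}
    (h : #s = k) (j : Fin k) : #{y ∈ s | y < s.orderEmbOfFin h j} = j := by
  have key : ∀ e : Fin k ↪o α, #{y ∈ univ.map e.toEmbedding | y < e j} = j := fun e => by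
    rw [filter_map, card_map]
    simp [filter_gt_eq_Iio]
  simpa using key (s.orderEmbOfFin h)

theorem mem_foldr_union {x : β} {L : List (Finset β)} {s : Finset β} :
    x ∈ L.foldr (· ∪ ·) s ↔ x ∈ s ∨ ∃ K ∈ L, x ∈ K := by
  induction L with
  | nil => simp
  | cons K L ih =>
    simp only [List.foldr_cons, mem_union, ih, List.mem_cons, exists_eq_or_imp]
    tauto

theorem foldr_union_append_singleton (L : List (Finset β)) (K : Finset β) :
    (L ++ [K]).foldr (· ∪ ·) ∅ = L.foldr (· ∪ ·) ∅ ∪ K := by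
  ext x
  simp only [mem_foldr_union, List.mem_append, List.mem_singleton, mem_union]
  aesop

theorem subset_foldr_union {L : List (Finset β)} {K : Finset β} (hK : K ∈ L) :
    K ⊆ L.foldr (· ∪ ·) ∅ :=
  fun _ hx => mem_foldr_union.2 (Or.inr ⟨K, hK, hx⟩)

theorem disjoint_foldr_union_left {L : List (Finset β)} {K : Finset β} :
    Disjoint (L.foldr (· ∪ ·) ∅) K ↔ ∀ I ∈ L, Disjoint I K := by
  simp only [disjoint_left, mem_foldr_union, notMem_empty, false_or]
  aesop

def IsOrderedPartition (J : Finset β) (L : List (Finset β)) : Prop :=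
  (∀ I ∈ L, I ≠ ∅) ∧ L.Pairwise (fun I J => Disjoint I J) ∧ L.foldr (· ∪ ·) ∅ = J

theorem isOrderedPartition_empty_iff {L : List (Finset β)} :
    IsOrderedPartition ∅ L ↔ L = [] := by
  refine ⟨fun ⟨hne, _, hJ⟩ => List.eq_nil_iff_forall_not_mem.2 fun K hK =>
    hne K hK (subset_empty.1 (hJ ▸ subset_foldr_union hK)), ?_⟩
  rintro rfl
  simp [IsOrderedPartition]

theorem isOrderedPartition_append_singleton_iff {J K : Finset β} {L : List (Finset β)} :
    IsOrderedPartition J (L ++ [K]) ↔ L.foldr (· ∪ ·) ∅ ⊂ J ∧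
      IsOrderedPartition (L.foldr (· ∪ ·) ∅) L ∧ K = J \ L.foldr (· ∪ ·) ∅ := by
  simp only [IsOrderedPartition, List.mem_append, List.mem_singleton, List.pairwise_append,
    List.pairwise_singleton, foldr_union_append_singleton, true_and, and_true]
  set U := L.foldr (· ∪ ·) ∅
  constructor
  · rintro ⟨hne, ⟨hpw, hdisj⟩, rfl⟩
    have hUK : Disjoint U K := disjoint_foldr_union_left.2 fun I hI => hdisj I hI K rfl
    have hK : K.Nonempty := nonempty_iff_ne_empty.2 (hne K (Or.inr rfl))
    refine ⟨Finset.ssubset_iff_subset_ne.2 ⟨subset_union_left, fun h => ?_⟩,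
      ⟨fun I hI => hne I (Or.inl hI), hpw⟩, (union_sdiff_cancel_left hUK).symm⟩
    obtain ⟨x, hx⟩ := hK
    exact disjoint_left.1 hUK (h ▸ mem_union_right U hx) hx
  · rintro ⟨hUJ, ⟨hne, hpw⟩, rfl⟩
    refine ⟨fun I hI => ?_, ⟨hpw, fun I hI _ h => h ▸ ?_⟩, union_sdiff_of_subset hUJ.subset⟩
    · rcases hI with hI | rfl
      · exact hne I hI
      · exact nonempty_iff_ne_empty.1 (sdiff_nonempty.2 (not_subset_of_ssubset hUJ))
    · exact disjoint_sdiff.mono_left (subset_foldr_union hI)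

theorem IsOrderedPartition.length_le {J : Finset β} {L : List (Finset β)}
    (h : IsOrderedPartition J L) : L.length ≤ #J := by
  induction L generalizing J with
  | nil => simp
  | cons K L ih =>
    obtain ⟨hne, hpw, rfl⟩ := h
    rw [List.pairwise_cons] at hpw
    have hdisj : Disjoint K (L.foldr (· ∪ ·) ∅) :=
      (disjoint_foldr_union_left.2 fun I hI => (hpw.1 I hI).symm).symm
    have hK : 0 < #K := card_pos.2 (nonempty_iff_ne_empty.2 (hne K List.mem_cons_self))
    have := ih ⟨fun I hI => hne I (List.mem_cons_of_mem K hI), hpw.2, rfl⟩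
    rw [List.length_cons, List.foldr_cons, card_union_of_disjoint hdisj]
    omega

theorem isOrderedPartition_map_iff {β' : Type*} [DecidableEq β'] (e : β' ↪ β) {J : Finset β'}
    {L : List (Finset β')} :
    IsOrderedPartition (J.map e) (L.map (map e)) ↔ IsOrderedPartition J L := by
  have hfold : (L.map (map e)).foldr (· ∪ ·) ∅ = (L.foldr (· ∪ ·) ∅).map e := by
    induction L with
    | nil => simp
    | cons K L ih => simp [ih, map_union]
  simp [IsOrderedPartition, hfold, List.pairwise_map]

theorem IsOrderedPartition.exists_eq_map {β' : Type*} (e : β' ↪ β) {J : Finset β'}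
    {L : List (Finset β)} (h : IsOrderedPartition (J.map e) L) :
    ∃ L' : List (Finset β'), L'.map (map e) = L := by
  have hsub : ∀ K ∈ L, K ⊆ J.map e := fun K hK => h.2.2 ▸ subset_foldr_union hK
  clear h
  induction L with
  | nil => exact ⟨[], rfl⟩
  | cons K L ih =>
    obtain ⟨u, -, rfl⟩ := subset_map_iff.1 (hsub K List.mem_cons_self)
    obtain ⟨L', rfl⟩ := ih fun K' hK' => hsub K' (List.mem_cons_of_mem _ hK')
    exact ⟨u :: L', rfl⟩

variable [Fintype β]

theorem finite_setOf_isOrderedPartition (J : Finset β) :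
    {L | IsOrderedPartition J L}.Finite :=
  (List.finite_length_le _ #J).subset fun _ h => IsOrderedPartition.length_le h

noncomputable def orderedPartitions (J : Finset β) : Finset (List (Finset β)) :=
  (finite_setOf_isOrderedPartition J).toFinset

@[simp] theorem mem_orderedPartitions {J : Finset β} {L : List (Finset β)} :
    L ∈ orderedPartitions J ↔ IsOrderedPartition J L :=
  Set.Finite.mem_toFinset _

theorem orderedPartitions_empty : orderedPartitions (∅ : Finset β) = {[]} := by
  ext L; simp [isOrderedPartition_empty_iff]

theorem sum_orderedPartitions_of_nonempty {M : Type*} [AddCommMonoid M] {J : Finset β}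
    (hJ : J.Nonempty) (f : List (Finset β) → M) :
    ∑ L ∈ orderedPartitions J, f L =
      ∑ I ∈ J.ssubsets, ∑ L ∈ orderedPartitions I, f (L ++ [J \ I]) := by
  have last : ∀ L ∈ orderedPartitions J, ∃ L' K, L = L' ++ [K] := fun L hL => by
    rcases List.eq_nil_or_concat L with rfl | ⟨L', K, rfl⟩
    · exact absurd (mem_orderedPartitions.1 hL).2.2.symm hJ.ne_empty
    · exact ⟨L', K, List.concat_eq_append⟩
  rw [sum_sigma']
  symm
  refine sum_nbij' (fun σ => σ.2 ++ [J \ σ.1]) (fun L => ⟨L.dropLast.foldr (· ∪ ·) ∅, L.dropLast⟩)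
    ?_ ?_ ?_ ?_ fun _ _ => rfl
  · rintro ⟨I, L⟩ h
    simp only [mem_sigma, mem_ssubsets, mem_orderedPartitions] at h ⊢
    rw [isOrderedPartition_append_singleton_iff, h.2.2.2]
    exact ⟨h.1, h.2, rfl⟩
  · intro L hL
    obtain ⟨L', K, rfl⟩ := last L hL
    have h := isOrderedPartition_append_singleton_iff.1 (mem_orderedPartitions.1 hL)
    simpa using ⟨h.1, h.2.1⟩
  · rintro ⟨I, L⟩ h
    simp only [mem_sigma, mem_orderedPartitions] at h
    simp [h.2.2.2]
  · intro L hL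
    obtain ⟨L', K, rfl⟩ := last L hL
    have h := isOrderedPartition_append_singleton_iff.1 (mem_orderedPartitions.1 hL)
    simp [h.2.2]

theorem orderedPartitions_map {β' : Type*} [DecidableEq β'] [Fintype β'] (e : β' ↪ β)
    (J : Finset β') :
    orderedPartitions (J.map e) = (orderedPartitions J).map
      ⟨List.map (map e), List.map_injective_iff.2 (map_injective e)⟩ := by
  ext L
  simp only [mem_orderedPartitions, mem_map, Function.Embedding.coeFn_mk]
  constructor
  · intro h
    obtain ⟨L', rfl⟩ := h.exists_eq_map
    exact ⟨L', (isOrderedPartition_map_iff e).1 h, rfl⟩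
  · rintro ⟨L', h, rfl⟩
    exact (isOrderedPartition_map_iff e).2 h

theorem finsum_ne_nil_isOrderedPartition {M : Type*} [AddCommMonoid M] {J : Finset β}
    (hJ : J.Nonempty) (f : List (Finset β) → M) :
    ∑ᶠ (L : List (Finset β)) (_ : L ≠ [] ∧ (∀ I ∈ L, I ≠ ∅) ∧
        List.Pairwise (fun I J => Disjoint I J) L ∧ L.foldr (· ∪ ·) ∅ = J), f L =
      ∑ L ∈ orderedPartitions J, f L := by
  have h : {L | L ≠ [] ∧ IsOrderedPartition J L} = ↑(orderedPartitions J) := by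
    ext L
    rw [Set.mem_ofPred_eq, mem_coe, mem_orderedPartitions]
    exact and_iff_right_of_imp fun h hL => hJ.ne_empty (hL ▸ h.2.2).symm
  rw [← finsum_mem_coe_finset, ← h]
  rfl

variable (R : Type*) {A : Type*} [CommRing R] [Ring A] [Algebra R A]

noncomputable def signedPartitionSum (g : Finset β → A) (J : Finset β) : A :=
  ∑ L ∈ orderedPartitions J, (-1 : R) ^ L.length • (L.map g).prod

theorem signedPartitionSum_empty (g : Finset β → A) : signedPartitionSum R g ∅ = 1 := by
  simp [signedPartitionSum, orderedPartitions_empty]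

theorem signedPartitionSum_of_nonempty {J : Finset β} (hJ : J.Nonempty) (g : Finset β → A) :
    signedPartitionSum R g J = -∑ I ∈ J.ssubsets, signedPartitionSum R g I * g (J \ I) := by
  rw [signedPartitionSum, sum_orderedPartitions_of_nonempty hJ, ← sum_neg_distrib]
  refine sum_congr rfl fun I _ => ?_
  rw [signedPartitionSum, sum_mul, ← sum_neg_distrib]
  refine sum_congr rfl fun L _ => ?_
  simp [pow_succ]

theorem signedPartitionSum_map {β' : Type*} [DecidableEq β'] [Fintype β'] (e : β' ↪ β)
    (g : Finset β → A) (J : Finset β') :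
    signedPartitionSum R (fun K => g (K.map e)) J = signedPartitionSum R g (J.map e) := by
  simp [signedPartitionSum, orderedPartitions_map, sum_map, List.map_map, Function.comp_def]

end Finset

namespace List

open Finset in
theorem countP_range'_eq_card (p : ℕ → Bool) (a n : ℕ) :
    (List.range' a n).countP p = #{m ∈ Finset.Ico a (a + n) | p m} := by
  simp [Nat.Ico_eq_range', Finset.card, List.countP_eq_length_filter]

theorem countP_range'_sub (p : ℕ → Bool) {a b m : ℕ} (hab : a ≤ b) (hbm : b ≤ m) :
    (List.range' a (m - a)).countP p =
      (List.range' a (b - a)).countP p + (List.range' b (m - b)).countP p := by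
  have h : b - a + (m - b) = m - a := by omega
  rw [← h, ← List.range'_append_1, List.countP_append, Nat.add_sub_cancel' hab]

end List

namespace Moerdijk

variable {X : Type u} {Ω : Type v}

@[elab_as_elim]
theorem forest_induction {motive : List (PTree X Ω) → Prop} (nil : motive [])
    (leaf : ∀ x, motive [.leafX x]) (node : ∀ ω cs, motive cs → motive [.node ω cs])
    (append : ∀ ts us, motive ts → motive us → motive (ts ++ us)) : ∀ ts, motive ts
  | [] => nil
  | .leafX x :: ts => append _ _ (leaf x) (forest_induction nil leaf node append ts)
  | .node ω cs :: ts =>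
    append _ _ (node ω cs (forest_induction nil leaf node append cs))
      (forest_induction nil leaf node append ts)

def numVF (ts : List (PTree X Ω)) : ℕ := (subF ts).length

@[simp] theorem numVF_nil : numVF ([] : List (PTree X Ω)) = 0 := rfl

@[simp] theorem numVF_leafX (x : X) : numVF [(.leafX x : PTree X Ω)] = 1 := rfl

@[simp] theorem numVF_node (ω : Ω) (cs : List (PTree X Ω)) :
    numVF [.node ω cs] = numVF cs + 1 := by
  simp [numVF, subF, subT]

@[simp] theorem numVF_append (ts us : List (PTree X Ω)) :
    numVF (ts ++ us) = numVF ts + numVF us := by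
  induction ts with
  | nil => simp
  | cons t ts ih => simp only [numVF, List.cons_append, subF, List.length_append] at ih ⊢; omega

theorem numV_eq_numVF (F : RForest X Ω) : numV F = numVF (FreeMonoid.toList F) := rfl

theorem numV_eq_zero {F : RForest X Ω} : numV F = 0 ↔ F = 1 := by
  have : ∀ ts : List (PTree X Ω), numVF ts = 0 ↔ ts = [] := by
    intro ts
    cases ts with
    | nil => simp
    | cons t ts => rw [← List.singleton_append, numVF_append]; cases t <;> simp
  rw [numV_eq_numVF, this, ← FreeMonoid.toList_one, FreeMonoid.toList.apply_eq_iff_eq]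

theorem univ_nonempty_of_ne_one {F : RForest X Ω} (hF : F ≠ 1) :
    (Finset.univ : Finset (Fin (numV F))).Nonempty :=
  Finset.univ_nonempty_iff.2 ⟨⟨0, Nat.pos_of_ne_zero (mt numV_eq_zero.1 hF)⟩⟩

section Restriction

variable (p q : ℕ → Bool)

@[simp] theorem restF_nil (off : ℕ) : restF p ([] : List (PTree X Ω)) off = [] := rfl

@[simp] theorem restF_leafX (x : X) (off : ℕ) :
    restF p [(.leafX x : PTree X Ω)] off = if p off then [.leafX x] else [] := by
  rw [restF, restT, restF_nil, List.append_nil]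

@[simp] theorem restF_node (ω : Ω) (cs : List (PTree X Ω)) (off : ℕ) :
    restF p [.node ω cs] off =
      if p off then [.node ω (restF p cs (off + 1))] else restF p cs (off + 1) := by
  rw [restF, restT, restF_nil, List.append_nil]

@[simp] theorem restF_append (ts us : List (PTree X Ω)) (off : ℕ) :
    restF p (ts ++ us) off = restF p ts off ++ restF p us (off + numVF ts) := by
  induction ts generalizing off with
  | nil => simp
  | cons t ts ih =>
    rw [List.cons_append, restF, restF, ih, List.append_assoc]
    congr 3
    simp only [numVF, subF, List.length_append]; omega

theorem numVF_restF (ts : List (PTree X Ω)) (off : ℕ) :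
    numVF (restF p ts off) = (List.range' off (numVF ts)).countP p := by
  induction ts using forest_induction generalizing off with
  | nil => simp
  | leaf x => cases h : p off <;> simp [h]
  | node ω cs ih => cases h : p off <;> simp [h, ih, List.range'_succ]
  | append ts us iht ihu =>
    rw [restF_append, numVF_append, iht, ihu, numVF_append, ← List.range'_append_1,
      List.countP_append]

theorem restF_congr {ts : List (PTree X Ω)} {off : ℕ}
    (h : ∀ m, off ≤ m → m < off + numVF ts → p m = q m) :
    restF p ts off = restF q ts off := by
  induction ts using forest_induction generalizing off with
  | nil => rfl
  | leaf x => simp [h off le_rfl (by simp)]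
  | node ω cs ih =>
    simp only [numVF_node] at h
    rw [restF_node, restF_node, h off le_rfl (by omega),
      ih fun m h₁ h₂ => h m (by omega) (by omega)]
  | append ts us iht ihu =>
    simp only [numVF_append] at h
    rw [restF_append, restF_append, iht fun m h₁ h₂ => h m h₁ (by omega),
      ihu fun m h₁ h₂ => h m (by omega) (by omega)]

theorem restF_of_forall {ts : List (PTree X Ω)} {off : ℕ}
    (h : ∀ m, off ≤ m → m < off + numVF ts → p m = true) :
    restF p ts off = ts := by
  induction ts using forest_induction generalizing off with
  | nil => rfl
  | leaf x => simp [h off le_rfl (by simp)]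
  | node ω cs ih =>
    simp only [numVF_node] at h
    rw [restF_node, h off le_rfl (by omega), if_pos rfl,
      ih fun m h₁ h₂ => h m (by omega) (by omega)]
  | append ts us iht ihu =>
    simp only [numVF_append] at h
    rw [restF_append, iht fun m h₁ h₂ => h m h₁ (by omega),
      ihu fun m h₁ h₂ => h m (by omega) (by omega)]

/-- After restricting by `p` the vertices numbered from `off`, the survivor `m` is renumbered
`qoff` plus the number of positions in `[off, m)` kept by `p`; `q` is then applied there. -/
def compPred (off qoff : ℕ) (m : ℕ) : Bool :=
  p m && q (qoff + (List.range' off (m - off)).countP p)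

theorem compPred_shift {off b m : ℕ} (qoff : ℕ) (hb : off ≤ b) (hm : b ≤ m) :
    compPred p q b (qoff + (List.range' off (b - off)).countP p) m = compPred p q off qoff m := by
  rw [compPred, compPred, List.countP_range'_sub p hb hm, Nat.add_assoc]

theorem restF_restF (ts : List (PTree X Ω)) (off qoff : ℕ) :
    restF q (restF p ts off) qoff = restF (compPred p q off qoff) ts off := by
  induction ts using forest_induction generalizing off qoff with
  | nil => rfl
  | leaf x => cases h : p off <;> simp [compPred, h]
  | node ω cs ih =>
    have hc := restF_congr (compPred p q (off + 1) (qoff + if p off then 1 else 0))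
      (compPred p q off qoff) (ts := cs) (off := off + 1)
      fun m hm _ => by simpa using compPred_shift p q qoff (Nat.le_add_right off 1) hm
    cases h : p off <;> simp_all [compPred]
  | append ts us iht ihu =>
    rw [restF_append, restF_append, restF_append, iht, ihu, numVF_restF]
    congr 1
    refine restF_congr _ _ fun m hm _ => ?_
    simpa using compPred_shift p q qoff (Nat.le_add_right off (numVF ts)) hm

end Restriction

section InducedSubforest

open Finset

theorem countP_range'_mem {n : ℕ} (I : Finset (Fin n)) (b : ℕ) :
    (List.range' 0 b).countP (fun m => decide (∃ i ∈ I, (i : ℕ) = m)) =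
      #(I.filter fun y : Fin n => (y : ℕ) < b) := by
  rw [List.countP_range'_eq_card, ← card_map Fin.valEmbedding]
  congr 1
  ext m
  simp only [mem_filter, mem_Ico, mem_map, Fin.valEmbedding_apply, decide_eq_true_eq,
    Nat.zero_add]
  constructor
  · rintro ⟨hm, i, hi, rfl⟩
    exact ⟨i, ⟨hi, hm.2⟩, rfl⟩
  · rintro ⟨i, ⟨hi, hib⟩, rfl⟩
    exact ⟨⟨Nat.zero_le _, hib⟩, i, hi, rfl⟩

variable (F : RForest X Ω)

theorem toList_indSub (I : Finset (Fin (numV F))) :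
    FreeMonoid.toList (indSub F I) =
      restF (fun m => decide (∃ i ∈ I, (i : ℕ) = m)) (FreeMonoid.toList F) 0 :=
  rfl

theorem numV_indSub (I : Finset (Fin (numV F))) : numV (indSub F I) = #I := by
  rw [numV_eq_numVF, toList_indSub, numVF_restF, ← numV_eq_numVF, countP_range'_mem]
  exact congrArg card (filter_true_of_mem fun y _ => y.2)

theorem indSub_univ : indSub F univ = F := by
  refine FreeMonoid.toList.injective (restF_of_forall _ fun m _ hm => ?_)
  simpa using ⟨⟨m, by rwa [numV_eq_numVF, ← Nat.zero_add (numVF _)]⟩, rfl⟩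

theorem indSub_empty : indSub F ∅ = 1 := by
  rw [← numV_eq_zero, numV_indSub, card_empty]

/-- The vertices of `F_I`, in the order `≤_{h,r}`, are those of `I` in the same order. -/
def vertexEmb (I : Finset (Fin (numV F))) : Fin (numV (indSub F I)) ↪o Fin (numV F) :=
  I.orderEmbOfFin (numV_indSub F I).symm

theorem map_univ_vertexEmb (I : Finset (Fin (numV F))) :
    univ.map (vertexEmb F I).toEmbedding = I :=
  map_orderEmbOfFin_univ _ _

theorem indSub_indSub (I : Finset (Fin (numV F))) (M : Finset (Fin (numV (indSub F I)))) :
    indSub (indSub F I) M = indSub F (M.map (vertexEmb F I).toEmbedding) := by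
  refine FreeMonoid.toList.injective ?_
  rw [toList_indSub, toList_indSub, toList_indSub, restF_restF]
  refine restF_congr _ _ fun m _ hm => ?_
  rw [Nat.zero_add, ← numV_eq_numVF] at hm
  obtain ⟨x, rfl⟩ : ∃ x : Fin (numV F), (x : ℕ) = m := ⟨⟨m, hm⟩, rfl⟩
  simp only [compPred, Nat.zero_add, Nat.sub_zero, countP_range'_mem, ← Fin.lt_def]
  by_cases hx : x ∈ I
  · obtain ⟨j, rfl⟩ : ∃ j, vertexEmb F I j = x := by
      rw [← map_univ_vertexEmb F I] at hx; simpa using hx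
    rw [vertexEmb, card_filter_lt_orderEmbOfFin]
    simp [Fin.val_inj]
  · have : ∀ j, vertexEmb F I j ≠ x := fun j h => hx (h ▸ orderEmbOfFin_mem _ _ j)
    simp [Fin.val_inj, hx, this]

end InducedSubforest

variable (k : Type w) [CommRing k]

section Coproduct

open Finset TensorProduct

variable {k}

theorem ofF_mul (F G : RForest X Ω) : ofF k (F * G) = ofF k F * ofF k G :=
  map_mul (MonoidAlgebra.of k (RForest X Ω)) F G

theorem ofF_one : ofF k (1 : RForest X Ω) = 1 :=
  map_one (MonoidAlgebra.of k (RForest X Ω))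

theorem Bplus_ofF_ofList (ω : Ω) (ts : List (PTree X Ω)) :
    Bplus k ω (ofF k (.ofList ts)) = ofF k (.ofList [.node ω ts]) :=
  MonoidAlgebra.mapDomainLinearMap_single _ _ _

theorem Delta_ofF (lam : k) (F : RForest X Ω) : Delta k lam (ofF k F) = DeltaF k lam F := by
  simp [Delta, ofF]

theorem eps_ofF_one : eps k (ofF k (1 : RForest X Ω)) = 1 := by
  simp [eps, ofF]

theorem eps_ofF_of_ne_one {F : RForest X Ω} (hF : F ≠ 1) : eps k (ofF k F) = 0 := by
  have : FreeMonoid.toList F ≠ [] := fun h => hF (FreeMonoid.toList.injective h)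
  simp [eps, ofF, this]

theorem DeltaT_node (lam : k) (ω : Ω) (ts : List (PTree X Ω)) :
    DeltaT k lam (.node ω ts) =
      (map (Bplus k ω) LinearMap.id + map LinearMap.id (Bplus k ω) :
        RAlg k X Ω ⊗[k] RAlg k X Ω →ₗ[k] RAlg k X Ω ⊗[k] RAlg k X Ω)
        (ts.map (DeltaT k lam)).prod := by
  rw [DeltaT, List.attach_map_val]

variable (k) in
/-- `Δ₀` of the forest `ts` as a sum over vertex subsets, the vertices of `ts` being numbered
`off, off + 1, …` in the order `≤_{h,r}`. -/
noncomputable def splitSum (ts : List (PTree X Ω)) (off : ℕ) : RAlg k X Ω ⊗[k] RAlg k X Ω :=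
  ∑ s ∈ (Ico off (off + numVF ts)).powerset,
    ofF k (.ofList (restF (fun m => decide (m ∈ s)) ts off)) ⊗ₜ[k]
      ofF k (.ofList (restF (fun m => decide (m ∉ s)) ts off))

theorem splitSum_append (ts us : List (PTree X Ω)) (off : ℕ) :
    splitSum k (ts ++ us) off = splitSum k ts off * splitSum k us (off + numVF ts) := by
  rw [splitSum, splitSum, splitSum, sum_mul_sum, numVF_append, ← Nat.add_assoc,
    ← Ico_union_Ico_eq_Ico (Nat.le_add_right _ _) (Nat.le_add_right _ _),
    sum_powerset_union (Ico_disjoint_Ico_consecutive _ _ _)]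
  refine sum_congr rfl fun s hs => sum_congr rfl fun u hu => ?_
  rw [mem_powerset] at hs hu
  have hs' : ∀ m, off ≤ m → m < off + numVF ts → (m ∈ s ∪ u ↔ m ∈ s) := fun m _ hm => by
    simp only [mem_union, or_iff_left_iff_imp]
    intro h; have := (mem_Ico.1 (hu h)).1; omega
  have hu' : ∀ m, off + numVF ts ≤ m → (m ∈ s ∪ u ↔ m ∈ u) := fun m hm => by
    simp only [mem_union, or_iff_right_iff_imp]
    intro h; have := (mem_Ico.1 (hs h)).2; omega
  have e₁ : restF (fun m => decide (m ∈ s ∪ u)) ts off = restF (fun m => decide (m ∈ s)) ts off :=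
    restF_congr _ _ fun m h₁ h₂ => by simp [hs' m h₁ h₂]
  have e₂ : restF (fun m => decide (m ∉ s ∪ u)) ts off = restF (fun m => decide (m ∉ s)) ts off :=
    restF_congr _ _ fun m h₁ h₂ => by simp [hs' m h₁ h₂]
  have e₃ : restF (fun m => decide (m ∈ s ∪ u)) us (off + numVF ts) =
      restF (fun m => decide (m ∈ u)) us (off + numVF ts) :=
    restF_congr _ _ fun m h₁ _ => by simp [hu' m h₁]
  have e₄ : restF (fun m => decide (m ∉ s ∪ u)) us (off + numVF ts) =
      restF (fun m => decide (m ∉ u)) us (off + numVF ts) :=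
    restF_congr _ _ fun m h₁ _ => by simp [hu' m h₁]
  rw [Algebra.TensorProduct.tmul_mul_tmul, ← ofF_mul, ← ofF_mul, restF_append, restF_append,
    FreeMonoid.ofList_append, FreeMonoid.ofList_append, e₁, e₂, e₃, e₄]

theorem splitSum_leafX (x : X) (off : ℕ) :
    splitSum k [.leafX x] off = DeltaT k 0 (.leafX x : PTree X Ω) := by
  rw [splitSum, numVF_leafX, Nat.Ico_succ_singleton,
    ← insert_empty, sum_powerset_insert (notMem_empty off)]
  simp [DeltaT, leafF, ofF_one, add_comm]

theorem splitSum_node (ω : Ω) (cs : List (PTree X Ω)) (off : ℕ) :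
    splitSum k [.node ω cs] off =
      (map (Bplus k ω) LinearMap.id + map LinearMap.id (Bplus k ω) :
        RAlg k X Ω ⊗[k] RAlg k X Ω →ₗ[k] RAlg k X Ω ⊗[k] RAlg k X Ω) (splitSum k cs (off + 1)) := by
  rw [splitSum, splitSum, numVF_node, Nat.add_comm _ 1,
    ← Nat.add_assoc, ← insert_Ico_add_one_left_eq_Ico (by omega),
    sum_powerset_insert (by simp), map_sum, add_comm, ← sum_add_distrib]
  refine sum_congr rfl fun s hs => ?_
  have hoff : off ∉ s := fun h => by have := mem_Ico.1 (mem_powerset.1 hs h); omega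
  have e₁ : restF (fun m => decide (m ∈ insert off s)) cs (off + 1) =
      restF (fun m => decide (m ∈ s)) cs (off + 1) :=
    restF_congr _ _ fun m h₁ _ => by simp [show m ≠ off by omega]
  have e₂ : restF (fun m => decide (m ∉ insert off s)) cs (off + 1) =
      restF (fun m => decide (m ∉ s)) cs (off + 1) :=
    restF_congr _ _ fun m h₁ _ => by simp [show m ≠ off by omega]
  simp only [restF_node, e₁, e₂]
  simp [hoff, Bplus_ofF_ofList, add_comm]

theorem prod_DeltaT_zero (ts : List (PTree X Ω)) (off : ℕ) :
    (ts.map (DeltaT k 0)).prod = splitSum k ts off := by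
  induction ts using forest_induction generalizing off with
  | nil => simp [splitSum, ofF_one, Algebra.TensorProduct.one_def]
  | leaf x => simp [splitSum_leafX]
  | node ω cs ih => rw [List.map_singleton, List.prod_singleton, DeltaT_node, ih, splitSum_node]
  | append ts us iht ihu => rw [List.map_append, List.prod_append, iht, ihu, splitSum_append]

theorem Delta_zero_ofF (F : RForest X Ω) :
    Delta k 0 (ofF k F) =
      ∑ I : Finset (Fin (numV F)), ofF k (indSub F I) ⊗ₜ[k] ofF k (indSub F Iᶜ) := by
  rw [Delta_ofF, DeltaF, prod_DeltaT_zero _ 0, splitSum, Nat.zero_add, ← numV_eq_numVF,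
    Nat.Ico_zero_eq_range, ← Nat.Iio_eq_range, ← Fin.map_valEmbedding_univ, map_eq_image,
    powerset_image, sum_image fun I _ J _ h => image_injective Fin.valEmbedding.injective h,
    powerset_univ]
  refine sum_congr rfl fun I _ => ?_
  rw [indSub, indSub]
  congr 3
  · simp
  · refine restF_congr _ _ fun m _ hm => ?_
    rw [Nat.zero_add, ← numV_eq_numVF] at hm
    obtain ⟨x, rfl⟩ : ∃ x : Fin (numV F), (x : ℕ) = m := ⟨⟨m, hm⟩, rfl⟩
    simp [Fin.val_inj]

end Coproduct
section Antipode

open Finset TensorProduct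

variable {k}

theorem signedPartitionSum_indSub (F : RForest X Ω) (I : Finset (Fin (numV F))) :
    signedPartitionSum k (fun M => ofF k (indSub (indSub F I) M)) univ =
      signedPartitionSum k (fun K => ofF k (indSub F K)) I := by
  simp_rw [indSub_indSub]
  rw [signedPartitionSum_map k (vertexEmb F I).toEmbedding (fun K => ofF k (indSub F K)),
    map_univ_vertexEmb]

variable {S : RAlg k X Ω →ₗ[k] RAlg k X Ω}
  (hS : ∀ x, LinearMap.mul' k (RAlg k X Ω) (map S LinearMap.id (Delta k 0 x)) = eps k x • 1)
include hS

theorem antipode_ofF_recursion (F : RForest X Ω) :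
    S (ofF k F) = eps k (ofF k F) • 1 -
      ∑ I ∈ (univ : Finset (Fin (numV F))).ssubsets,
        S (ofF k (indSub F I)) * ofF k (indSub F (univ \ I)) := by
  have h := hS (ofF k F)
  simp only [Delta_zero_ofF, map_sum, map_tmul, LinearMap.mul'_apply, LinearMap.id_apply] at h
  rw [← h, ← powerset_univ, ← add_sum_erase _ _ (mem_powerset_self univ), indSub_univ,
    compl_univ, indSub_empty, ofF_one, mul_one, ← ssubsets, add_sub_assoc]
  simp_rw [compl_eq_univ_sdiff, sub_self, add_zero]

theorem antipode_ofF (F : RForest X Ω) :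
    S (ofF k F) = signedPartitionSum k (fun I => ofF k (indSub F I)) univ := by
  rw [antipode_ofF_recursion hS]
  by_cases hF : F = 1
  · subst hF
    have h₀ : (univ : Finset (Fin (numV (1 : RForest X Ω)))) = ∅ :=
      eq_empty_of_forall_notMem fun i _ => Nat.not_lt_zero _ i.2
    rw [h₀, eps_ofF_one, one_smul, signedPartitionSum_empty]
    simp [ssubsets]
  · rw [eps_ofF_of_ne_one hF, zero_smul, zero_sub,
      signedPartitionSum_of_nonempty k (univ_nonempty_of_ne_one hF)]
    congr 1
    refine sum_congr rfl fun I hI => ?_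
    rw [antipode_ofF (indSub F I), signedPartitionSum_indSub]
termination_by numV F
decreasing_by
  simpa [numV_indSub] using card_lt_card (mem_ssubsets.1 hI)

end Antipode

/-- If `S` is the antipode of the connected graded Hopf algebra `(H(X,Ω), m, 1, Δ₀, ε)`,
then for every nonempty forest `F`,
`S(F) = Σ_{I₁ ⊔ ⋯ ⊔ I_k = V(F)} (−1)^k F_{I₁} ⋯ F_{I_k}`, the sum being over all ordered
tuples of pairwise disjoint nonempty subsets of `V(F)` covering `V(F)`. -/
theorem antipode_formula [Nonempty Ω]
    (S : RAlg k X Ω →ₗ[k] RAlg k X Ω)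
    (hS₁ : ∀ x, LinearMap.mul' k (RAlg k X Ω)
        (TensorProduct.map S LinearMap.id (Delta k 0 x)) = eps k x • 1)
    (hS₂ : ∀ x, LinearMap.mul' k (RAlg k X Ω)
        (TensorProduct.map LinearMap.id S (Delta k 0 x)) = eps k x • 1)
    (F : RForest X Ω) (hF : F ≠ 1) :
    S (ofF k F) =
      ∑ᶠ (L : List (Finset (Fin (numV F))))
        (_ : L ≠ [] ∧ (∀ I ∈ L, I ≠ ∅) ∧
          List.Pairwise (fun I J => Disjoint I J) L ∧
          L.foldr (· ∪ ·) ∅ = Finset.univ),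
        ((-1 : k) ^ L.length) • (L.map fun I => ofF k (indSub F I)).prod := by
  rw [antipode_ofF hS₁, Finset.signedPartitionSum,
    Finset.finsum_ne_nil_isOrderedPartition (univ_nonempty_of_ne_one hF)]

end Moerdijk
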